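/- arXiv:2202.10264 — 2 statements merged into one kernel-verified Lean document; each statement's English description precedes it below -/
import Mathlib

section
/- For every β > 0 there exists μ_β > 0, namely μ_β = min_{ξ∈ℝⁿ} (ψ(ξ)² + |1 − φ̂(βξ)|²), such that for all u ∈ L²(ℝⁿ) one has ‖Au‖²_{L²} + ‖(I − C_β)u‖²_{L²} ≥ μ_β ‖u‖²_{L²}; consequently the operator A*A + (I − C_β)*(I − C_β) is continuously invertible on L²(ℝⁿ) with inverse of operator norm at most 1/μ_β, and the mapping R_β : L²(ℝⁿ) → L²(ℝⁿ) sending g to the unique minimizer u_β of J_β(·, A, g) is linear and bounded with operator norm at most 1/μ_β. -/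
/-
STATEMENT 1: For every β > 0 there exists μ_β > 0, namely
μ_β = min_{ξ∈ℝⁿ} (ψ(ξ)² + |1 − φ̂(βξ)|²), such that
‖Au‖² + ‖(I − C_β)u‖² ≥ μ_β ‖u‖² for all u ∈ L²; consequently
A*A + (I − C_β)*(I − C_β) is continuously invertible with inverse of norm ≤ 1/μ_β,
and the map R_β sending g to the unique minimizer of J_β(·, A, g) is linear and
bounded with operator norm ≤ 1/μ_β.
-/

open MeasureTheory Filter ContinuousLinearMap
open scoped Topology ENNReal

noncomputable section

abbrev Rn (n : ℕ) : Type := EuclideanSpace ℝ (Fin n)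
abbrev L2 (n : ℕ) : Type := MeasureTheory.Lp ℂ 2 (volume : Measure (Rn n))

/-- The symbol ψ(ξ) = exp(−(2π|ξ|)^{2τ} ∫₀ᵀ γ(λ)dλ). -/
def psi (n : ℕ) (τ T : ℝ) (γ : ℝ → ℝ) (ξ : Rn n) : ℝ :=
  Real.exp (-((2 * Real.pi * ‖ξ‖) ^ (2 * τ)) * ∫ t in Set.Ioc (0 : ℝ) T, γ t)

/-- The mollification φ_β ⋆ f, where φ_β(x) = β^{−n} φ(x/β). -/
def mollify (n : ℕ) (φ : Rn n → ℝ) (β : ℝ) (f : Rn n → ℂ) (x : Rn n) : ℂ :=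
  ∫ y, (((β ^ n)⁻¹ * φ (β⁻¹ • (x - y)) : ℝ) : ℂ) * f y

/-- φ̂, the Fourier transform of the kernel φ. -/
def phiHat (n : ℕ) (φ : Rn n → ℝ) (ξ : Rn n) : ℂ :=
  VectorFourier.fourierIntegral Real.fourierChar volume (innerₗ (Rn n)) (fun x => (φ x : ℂ)) ξ

section Helpers

open Real
open scoped RealInnerProductSpace FourierTransform

lemma l2_int_normSq {n : ℕ} (f : L2 n) :
    Integrable (fun x => ‖(f : Rn n → ℂ) x‖^2) (volume : Measure (Rn n)) := by
  have h := (MeasureTheory.L2.integrable_inner (𝕜 := ℂ) f f).re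
  refine h.congr (Eventually.of_forall fun x => ?_)
  exact inner_self_eq_norm_sq (𝕜 := ℂ) _

lemma l2_normSq {n : ℕ} (f : L2 n) : ‖f‖^2 = ∫ x, ‖(f : Rn n → ℂ) x‖^2 := by
  have h1 : (‖f‖:ℝ)^2 = RCLike.re (K := ℂ) (inner (𝕜 := ℂ) f f) :=
    (inner_self_eq_norm_sq (𝕜 := ℂ) f).symm
  rw [h1, MeasureTheory.L2.inner_def,
    ← integral_re (MeasureTheory.L2.integrable_inner (𝕜 := ℂ) f f)]
  exact integral_congr_ae (Eventually.of_forall fun x => inner_self_eq_norm_sq (𝕜 := ℂ) _)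

lemma l2_normSq' {n : ℕ} (f : L2 n) {g : Rn n → ℂ} (hg : (f : Rn n → ℂ) =ᵐ[volume] g) :
    ‖f‖^2 = ∫ x, ‖g x‖^2 := by
  rw [l2_normSq f]
  exact integral_congr_ae (hg.mono fun x hx => by simp only [hx])

lemma l2_int_normSq' {n : ℕ} (f : L2 n) {g : Rn n → ℂ} (hg : (f : Rn n → ℂ) =ᵐ[volume] g) :
    Integrable (fun x => ‖g x‖^2) (volume : Measure (Rn n)) :=
  (l2_int_normSq f).congr (hg.mono fun x hx => by simp only [hx])

lemma fourier_conv {n : ℕ} {f g : Rn n → ℂ}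
    (hf : Integrable f (volume : Measure (Rn n))) (hg : Integrable g volume) (ξ : Rn n) :
    FourierTransform.fourier (fun x => ∫ y, f (x - y) * g y) ξ
      = FourierTransform.fourier f ξ * FourierTransform.fourier g ξ := by
  set e : Rn n → ℂ := fun x => (𝐞 (-⟪x, ξ⟫) : ℂ) with he
  have he_norm : ∀ x, ‖e x‖ = 1 := fun x => by
    simp only [he, Circle.norm_coe]
  have he_add : ∀ x y, e (x + y) = e x * e y := by
    intro x y
    simp only [he, inner_add_left, neg_add, AddChar.map_add_eq_mul, Circle.coe_mul]
  have he_cont : Continuous e := by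
    have h1 : Continuous fun z : Circle => (z : ℂ) := continuous_induced_dom
    exact h1.comp <| Real.continuous_fourierChar.comp
      (continuous_inner.comp (continuous_id.prodMk continuous_const)).neg
  have hFI : ∀ (h : Rn n → ℂ), FourierTransform.fourier h ξ = ∫ x, e x * h x := by
    intro h
    rw [Real.fourier_eq]
    simp only [Circle.smul_def, he, smul_eq_mul]
  have hint : Integrable (fun p : Rn n × Rn n => e p.1 * (f (p.1 - p.2) * g p.2))
      (volume.prod volume) := by
    have h0 := hg.convolution_integrand (ContinuousLinearMap.mul ℂ ℂ) hf
    have h1 : Integrable (fun p : Rn n × Rn n => f (p.1 - p.2) * g p.2) (volume.prod volume) := by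
      refine h0.congr (Eventually.of_forall fun p => ?_)
      simp [mul_comm]
    exact h1.bdd_mul ((he_cont.comp continuous_fst).aestronglyMeasurable)
      (Eventually.of_forall fun p => le_of_eq (he_norm _))
  calc FourierTransform.fourier (fun x => ∫ y, f (x - y) * g y) ξ
      = ∫ x, ∫ y, e x * (f (x - y) * g y) := by
        rw [hFI]
        exact integral_congr_ae (Eventually.of_forall fun x => (integral_const_mul _ _).symm)
    _ = ∫ y, ∫ x, e x * (f (x - y) * g y) := integral_integral_swap hint
    _ = ∫ y, (e y * FourierTransform.fourier f ξ) * g y := by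
        refine integral_congr_ae (Eventually.of_forall fun y => ?_)
        dsimp only
        have h2 : (∫ x, e x * (f (x - y) * g y)) = (∫ x, e x * f (x - y)) * g y := by
          rw [← integral_mul_const]
          exact integral_congr_ae (Eventually.of_forall fun x => by ring)
        rw [h2]
        congr 1
        have hsub : (∫ x, e x * f (x - y)) = ∫ z, e (z + y) * f z := by
          rw [← integral_add_right_eq_self (μ := (volume : Measure (Rn n)))
            (fun x => e x * f (x - y)) y]
          simp
        rw [hsub, hFI]
        simp only [he_add]
        rw [← integral_const_mul]
        exact integral_congr_ae (Eventually.of_forall fun z => by ring)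
    _ = FourierTransform.fourier f ξ * FourierTransform.fourier g ξ := by
        rw [hFI g, ← integral_const_mul]
        exact integral_congr_ae (Eventually.of_forall fun y => by ring)

lemma fourier_scale {n : ℕ} (φ : Rn n → ℝ) {β : ℝ} (hβ : 0 < β) (ξ : Rn n) :
    FourierTransform.fourier (fun x : Rn n => (((β ^ n)⁻¹ * φ (β⁻¹ • x) : ℝ) : ℂ)) ξ
      = FourierTransform.fourier (fun x => (φ x : ℂ)) (β • ξ) := by
  have hβ0 : β ≠ 0 := hβ.ne'
  rw [Real.fourier_eq, Real.fourier_eq]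
  have key : ∀ x : Rn n, 𝐞 (-⟪x, ξ⟫) • ((((β ^ n)⁻¹ * φ (β⁻¹ • x) : ℝ)) : ℂ)
      = (β ^ n)⁻¹ • (fun y : Rn n => 𝐞 (-⟪y, β • ξ⟫) • ((φ y : ℂ))) (β⁻¹ • x) := by
    intro x
    have hi : ⟪β⁻¹ • x, β • ξ⟫ = ⟪x, ξ⟫ := by
      rw [real_inner_smul_left, real_inner_smul_right, ← mul_assoc]
      field_simp
    dsimp only
    rw [hi]
    simp only [Circle.smul_def, smul_eq_mul, Complex.real_smul]
    push_cast
    ring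
  simp_rw [key]
  rw [integral_smul]
  have := MeasureTheory.Measure.integral_comp_inv_smul_of_nonneg
    (volume : Measure (Rn n)) (fun y : Rn n => 𝐞 (-⟪y, β • ξ⟫) • ((φ y : ℂ))) hβ.le
  rw [this, finrank_euclideanSpace_fin, smul_smul, inv_mul_cancel₀ (pow_ne_zero _ hβ0), one_smul]

lemma fourier_congr {n : ℕ} {f g : Rn n → ℂ} (h : f =ᵐ[(volume : Measure (Rn n))] g) (ξ : Rn n) :
    FourierTransform.fourier f ξ = FourierTransform.fourier g ξ := by
  rw [Real.fourier_eq, Real.fourier_eq]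
  exact integral_congr_ae (h.mono fun x hx => by simp only [hx])

lemma fourier_at_zero {n : ℕ} (f : Rn n → ℂ) :
    FourierTransform.fourier f 0 = ∫ x, f x := by
  rw [Real.fourier_eq]
  simp

end Helpers

set_option maxHeartbeats 2000000 in
theorem stmt1
    (n : ℕ) (τ T : ℝ) (hτ : τ ∈ Set.Ioc (0 : ℝ) 1) (hT : 0 < T)
    (γ : ℝ → ℝ) (hγpos : ∀ t ∈ Set.Ioo 0 T, 0 < γ t)
    (hγint : IntegrableOn γ (Set.Ioc 0 T))
    -- the Fourier–Plancherel transform on L²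
    (F : L2 n ≃ₗᵢ[ℂ] L2 n)
    (hF : ∀ f : L2 n, Integrable (⇑f) volume →
      ⇑(F f) =ᵐ[volume] VectorFourier.fourierIntegral Real.fourierChar volume (innerₗ (Rn n)) (⇑f))
    -- the operator A = 𝓕⁻¹ (ψ ·) 𝓕
    (A : L2 n →L[ℂ] L2 n)
    (hA : ∀ f : L2 n,
      ⇑(F (A f)) =ᵐ[volume] fun ξ => (psi n τ T γ ξ : ℂ) * (F f : Rn n → ℂ) ξ)
    -- the mollifier kernel φ and the convolution operators C_β
    (φ : Rn n → ℝ) (hφint : Integrable φ (volume : Measure (Rn n)))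
    (hφ1 : ∫ x, φ x = 1)
    (hφhat_cont : Continuous (phiHat n φ))
    (hφhat_zero : Tendsto (fun ξ : Rn n => ‖phiHat n φ ξ‖) (Filter.cocompact (Rn n)) (𝓝 0))
    (hpos : ∀ (β : ℝ), 0 < β → ∀ ξ : Rn n,
      0 < psi n τ T γ ξ ^ 2 + ‖1 - phiHat n φ (β • ξ)‖ ^ 2)
    (C : ℝ → (L2 n →L[ℂ] L2 n))
    (hC : ∀ β : ℝ, 0 < β → ∀ f : L2 n, ⇑(C β f) =ᵐ[volume] mollify n φ β ⇑f)
    (β : ℝ) (hβ : 0 < β) :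
    ∃ μβ : ℝ, 0 < μβ ∧
      -- μ_β is the minimum over ξ ∈ ℝⁿ of ψ(ξ)² + |1 − φ̂(βξ)|²
      IsLeast {v : ℝ | ∃ ξ : Rn n, v = psi n τ T γ ξ ^ 2 + ‖1 - phiHat n φ (β • ξ)‖ ^ 2} μβ ∧
      -- the coercivity estimate ‖Au‖² + ‖(I − C_β)u‖² ≥ μ_β ‖u‖²
      (∀ u : L2 n, μβ * ‖u‖ ^ 2 ≤ ‖A u‖ ^ 2 + ‖u - C β u‖ ^ 2) ∧
      -- A*A + (I − C_β)*(I − C_β) is continuously invertible with inverse norm ≤ 1/μ_β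
      (∃ S : L2 n →L[ℂ] L2 n,
        S ∘L (adjoint A ∘L A +
            adjoint (ContinuousLinearMap.id ℂ (L2 n) - C β) ∘L
              (ContinuousLinearMap.id ℂ (L2 n) - C β)) = ContinuousLinearMap.id ℂ (L2 n) ∧
        (adjoint A ∘L A +
            adjoint (ContinuousLinearMap.id ℂ (L2 n) - C β) ∘L
              (ContinuousLinearMap.id ℂ (L2 n) - C β)) ∘L S = ContinuousLinearMap.id ℂ (L2 n) ∧
        ‖S‖ ≤ 1 / μβ) ∧
      -- R_β, sending g to the unique minimizer of J_β(·, A, g), is linear and bounded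
      -- with operator norm ≤ 1/μ_β
      (∃ R : L2 n →L[ℂ] L2 n, ‖R‖ ≤ 1 / μβ ∧
        ∀ g : L2 n,
          (∀ u : L2 n,
            ‖A (R g) - g‖ ^ 2 + ‖R g - C β (R g)‖ ^ 2 ≤ ‖A u - g‖ ^ 2 + ‖u - C β u‖ ^ 2) ∧
          (∀ u : L2 n,
            (∀ v : L2 n,
              ‖A u - g‖ ^ 2 + ‖u - C β u‖ ^ 2 ≤ ‖A v - g‖ ^ 2 + ‖v - C β v‖ ^ 2) →
            u = R g)) := by
  classical
  have hτ2 : 0 < 2 * τ := by linarith [hτ.1]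
  -- positivity of the time integral
  have hc : 0 < ∫ t in Set.Ioc (0 : ℝ) T, γ t := by
    rw [MeasureTheory.setIntegral_pos_iff_support_of_nonneg_ae ?hnn hγint]
    · refine lt_of_lt_of_le
        (show (0 : ℝ≥0∞) < volume (Set.Ioo (0:ℝ) T) from ?_) (measure_mono ?_)
      · rw [Real.volume_Ioo]
        simpa using hT
      · intro t ht
        exact ⟨ne_of_gt (hγpos t ht), Set.Ioo_subset_Ioc_self ht⟩
    case hnn =>
      have hTs : ∀ᵐ t : ℝ ∂volume, t ≠ T := by
        rw [MeasureTheory.ae_iff]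
        have : {t : ℝ | ¬ t ≠ T} = {T} := by ext t; simp
        rw [this]
        exact measure_singleton T
      have h1 : ∀ᵐ t ∂(volume.restrict (Set.Ioc (0:ℝ) T)), t ∈ Set.Ioc (0:ℝ) T :=
        MeasureTheory.ae_restrict_mem measurableSet_Ioc
      have h2 : ∀ᵐ t ∂(volume.restrict (Set.Ioc (0:ℝ) T)), t ≠ T :=
        MeasureTheory.ae_restrict_of_ae hTs
      filter_upwards [h1, h2] with t ht hne
      simpa using (hγpos t ⟨ht.1, lt_of_le_of_ne ht.2 hne⟩).le
  set hfun : Rn n → ℝ := fun ξ => psi n τ T γ ξ ^ 2 + ‖1 - phiHat n φ (β • ξ)‖ ^ 2 with hfun_def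
  have hψpos : ∀ ξ, 0 < psi n τ T γ ξ := fun ξ => Real.exp_pos _
  have hψle : ∀ ξ, psi n τ T γ ξ ≤ 1 := by
    intro ξ
    rw [psi, Real.exp_le_one_iff, neg_mul, neg_nonpos]
    exact mul_nonneg (Real.rpow_nonneg (by positivity) _) hc.le
  have hψcont : Continuous (psi n τ T γ) := by
    unfold psi
    exact Real.continuous_exp.comp
      ((((continuous_const.mul continuous_norm).rpow_const
        (fun x => Or.inr hτ2.le)).neg).mul continuous_const)
  have hcontfun : Continuous hfun := by
    rw [hfun_def]
    exact (hψcont.pow 2).add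
      (((continuous_const.sub (hφhat_cont.comp (continuous_const_smul β : Continuous fun ξ : Rn n => β • ξ))).norm).pow 2)
  have htendψ : Tendsto (psi n τ T γ) (cocompact (Rn n)) (𝓝 0) := by
    have h1 : Tendsto (fun ξ : Rn n => ‖ξ‖) (cocompact (Rn n)) atTop :=
      tendsto_norm_cocompact_atTop
    have h2 : Tendsto (fun ξ : Rn n => 2 * Real.pi * ‖ξ‖) (cocompact (Rn n)) atTop :=
      h1.const_mul_atTop (by positivity)
    have h3 : Tendsto (fun ξ : Rn n => (2 * Real.pi * ‖ξ‖) ^ (2 * τ)) (cocompact (Rn n)) atTop :=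
      (tendsto_rpow_atTop hτ2).comp h2
    have h4 : Tendsto (fun ξ : Rn n => -((2 * Real.pi * ‖ξ‖) ^ (2 * τ)) *
        ∫ t in Set.Ioc (0 : ℝ) T, γ t) (cocompact (Rn n)) atBot := by
      have h5 := tendsto_neg_atTop_atBot.comp (h3.atTop_mul_const hc)
      refine h5.congr fun ξ => by simp [Function.comp]
    exact Real.tendsto_exp_atBot.comp h4
  have htendfun : Tendsto hfun (cocompact (Rn n)) (𝓝 1) := by
    have hmap : Tendsto (fun ξ : Rn n => β • ξ) (cocompact (Rn n)) (cocompact (Rn n)) := by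
      have := (Homeomorph.smul (Units.mk0 β hβ.ne') (α := Rn n)).map_cocompact
      exact le_of_eq this
    have h0 : Tendsto (phiHat n φ) (cocompact (Rn n)) (𝓝 0) :=
      tendsto_zero_iff_norm_tendsto_zero.mpr hφhat_zero
    have h6 : Tendsto (fun ξ : Rn n => ‖(1 : ℂ) - phiHat n φ (β • ξ)‖ ^ 2)
        (cocompact (Rn n)) (𝓝 1) := by
      have := (((tendsto_const_nhds (x := (1:ℂ)) (f := cocompact (Rn n))).sub
        (h0.comp hmap)).norm.pow 2)
      simpa using this
    have h5 : Tendsto (fun ξ : Rn n => psi n τ T γ ξ ^ 2) (cocompact (Rn n)) (𝓝 0) := by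
      simpa using htendψ.pow 2
    rw [hfun_def]
    simpa using h5.add h6
  have hfun0 : hfun 0 = 1 := by
    have hψ0 : psi n τ T γ 0 = 1 := by
      rw [psi]
      simp [Real.zero_rpow (ne_of_gt hτ2)]
    have hφ0 : phiHat n φ (0 : Rn n) = 1 := by
      rw [show phiHat n φ 0 = ∫ x, (φ x : ℂ) from fourier_at_zero _]
      have : ∫ x : Rn n, ((φ x : ℝ) : ℂ) = ((∫ x, φ x : ℝ) : ℂ) :=
        integral_ofReal (𝕜 := ℂ)
      rw [this, hφ1]
      norm_num
    rw [hfun_def]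
    simp [hψ0, smul_zero, hφ0]
  obtain ⟨ξm, hξm⟩ : ∃ ξm : Rn n, ∀ ξ, hfun ξm ≤ hfun ξ := by
    by_cases hex : ∃ ξ₀, hfun ξ₀ < 1
    · obtain ⟨ξ₀, hξ₀⟩ := hex
      exact Continuous.exists_forall_le' hcontfun ξ₀
        ((htendfun.eventually (eventually_gt_nhds hξ₀)).mono fun x h => h.le)
    · push_neg at hex
      exact ⟨0, fun ξ => by rw [hfun0]; exact hex ξ⟩
  set μ : ℝ := hfun ξm with hμ_def
  have hμpos : 0 < μ := hpos β hβ ξm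
  have hleast : IsLeast {v : ℝ | ∃ ξ : Rn n, v = psi n τ T γ ξ ^ 2
      + ‖1 - phiHat n φ (β • ξ)‖ ^ 2} μ := by
    constructor
    · exact ⟨ξm, rfl⟩
    · rintro v ⟨ξ, rfl⟩
      exact hξm ξ
  -- A is a contraction
  have normA_le : ∀ u : L2 n, ‖A u‖ ≤ ‖u‖ := by
    intro u
    rw [← F.norm_map (A u), ← F.norm_map u, Lp.norm_def, Lp.norm_def]
    refine ENNReal.toReal_mono (Lp.eLpNorm_ne_top _) ?_
    calc eLpNorm (⇑(F (A u))) 2 volume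
        = eLpNorm (fun ξ => (psi n τ T γ ξ : ℂ) * (F u : Rn n → ℂ) ξ) 2 volume :=
          eLpNorm_congr_ae (hA u)
      _ ≤ eLpNorm (⇑(F u)) 2 volume := by
          refine eLpNorm_mono_ae (Eventually.of_forall fun ξ => ?_)
          rw [norm_mul, Complex.norm_real, Real.norm_eq_abs, abs_of_pos (hψpos ξ)]
          calc psi n τ T γ ξ * ‖(F u : Rn n → ℂ) ξ‖
              ≤ 1 * ‖(F u : Rn n → ℂ) ξ‖ :=
                mul_le_mul_of_nonneg_right (hψle ξ) (norm_nonneg _)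
            _ = _ := one_mul _
  -- coercivity for integrable representatives
  have hmain : ∀ u : L2 n, Integrable (⇑u) volume →
      μ * ‖u‖ ^ 2 ≤ ‖A u‖ ^ 2 + ‖u - C β u‖ ^ 2 := by
    intro u hu
    set w : Rn n → ℂ := FourierTransform.fourier (⇑u) with hw
    have e1 : ⇑(F u) =ᵐ[volume] w := hF u hu
    have e2 : ⇑(F (A u)) =ᵐ[volume] fun ξ => (psi n τ T γ ξ : ℂ) * w ξ := by
      filter_upwards [hA u, e1] with ξ h1 h2
      rw [h1, h2]
    set φβ : Rn n → ℂ := fun x => (((β ^ n)⁻¹ * φ (β⁻¹ • x) : ℝ) : ℂ) with hφβ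
    have hφβint : Integrable φβ volume := by
      have h1 : Integrable (fun x : Rn n => φ (β⁻¹ • x)) volume :=
        hφint.comp_smul (inv_ne_zero hβ.ne')
      exact (h1.const_mul _).ofReal
    have hmol_eq : mollify n φ β ⇑u = fun x => ∫ y, φβ (x - y) * (⇑u) y := rfl
    have hmol_int : Integrable (mollify n φ β ⇑u) volume := by
      have h1 := hu.integrable_convolution (ContinuousLinearMap.mul ℂ ℂ) hφβint
      refine h1.congr (Eventually.of_forall fun x => ?_)
      rw [hmol_eq]
      dsimp only
      rw [convolution_def]
      exact integral_congr_ae (Eventually.of_forall fun y => mul_comm _ _)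
    have hCu : Integrable (⇑(C β u)) volume := hmol_int.congr (hC β hβ u).symm
    have e3 : ⇑(F (C β u)) =ᵐ[volume] fun ξ => phiHat n φ (β • ξ) * w ξ := by
      have h4 := hF (C β u) hCu
      have h5 : ∀ ξ, FourierTransform.fourier (⇑(C β u)) ξ = phiHat n φ (β • ξ) * w ξ := by
        intro ξ
        rw [fourier_congr (hC β hβ u) ξ, hmol_eq, fourier_conv hφβint hu ξ,
          fourier_scale φ hβ ξ]
        rfl
      exact h4.trans (Eventually.of_forall fun ξ => h5 ξ)
    have e4 : ⇑(F (u - C β u)) =ᵐ[volume] fun ξ => (1 - phiHat n φ (β • ξ)) * w ξ := by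
      have h6 : F (u - C β u) = F u - F (C β u) := map_sub F u (C β u)
      rw [h6]
      filter_upwards [Lp.coeFn_sub (F u) (F (C β u)), e1, e3] with ξ h7 h8 h9
      rw [h7]
      simp only [Pi.sub_apply, h8, h9]
      ring
    have nu : ‖u‖ ^ 2 = ∫ ξ, ‖w ξ‖ ^ 2 := by
      rw [← F.norm_map u]; exact l2_normSq' (F u) e1
    have nA : ‖A u‖ ^ 2 = ∫ ξ, (psi n τ T γ ξ) ^ 2 * ‖w ξ‖ ^ 2 := by
      rw [← F.norm_map (A u), l2_normSq' (F (A u)) e2]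
      refine integral_congr_ae (Eventually.of_forall fun ξ => ?_)
      simp only [norm_mul, mul_pow, Complex.norm_real, Real.norm_eq_abs, sq_abs]
    have nC : ‖u - C β u‖ ^ 2 = ∫ ξ, ‖1 - phiHat n φ (β • ξ)‖ ^ 2 * ‖w ξ‖ ^ 2 := by
      rw [← F.norm_map (u - C β u), l2_normSq' (F (u - C β u)) e4]
      refine integral_congr_ae (Eventually.of_forall fun ξ => ?_)
      simp only [norm_mul, mul_pow]
    have iA : Integrable (fun ξ => (psi n τ T γ ξ) ^ 2 * ‖w ξ‖ ^ 2) volume := by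
      refine (l2_int_normSq' (F (A u)) e2).congr (Eventually.of_forall fun ξ => ?_)
      simp only [norm_mul, mul_pow, Complex.norm_real, Real.norm_eq_abs, sq_abs]
    have iC : Integrable (fun ξ => ‖1 - phiHat n φ (β • ξ)‖ ^ 2 * ‖w ξ‖ ^ 2) volume := by
      refine (l2_int_normSq' (F (u - C β u)) e4).congr (Eventually.of_forall fun ξ => ?_)
      simp only [norm_mul, mul_pow]
    have iw : Integrable (fun ξ => ‖w ξ‖ ^ 2) volume := l2_int_normSq' (F u) e1
    rw [nu, nA, nC, ← integral_add iA iC, ← integral_const_mul]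
    refine integral_mono (iw.const_mul μ) (iA.add iC) fun ξ => ?_
    have h8 : μ ≤ psi n τ T γ ξ ^ 2 + ‖1 - phiHat n φ (β • ξ)‖ ^ 2 := hξm ξ
    have h9 : (0:ℝ) ≤ ‖w ξ‖ ^ 2 := sq_nonneg _
    dsimp only
    nlinarith [h8, h9]
  -- coercivity for all u by density
  have key : ∀ u : L2 n, μ * ‖u‖ ^ 2 ≤ ‖A u‖ ^ 2 + ‖u - C β u‖ ^ 2 := by
    have hclosed : IsClosed {v : L2 n | μ * ‖v‖ ^ 2 ≤ ‖A v‖ ^ 2 + ‖v - C β v‖ ^ 2} := by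
      apply isClosed_le
      · exact continuous_const.mul (continuous_norm.pow 2)
      · exact ((continuous_norm.comp A.continuous).pow 2).add
          ((continuous_norm.comp (continuous_id.sub (C β).continuous)).pow 2)
    intro u
    refine (Lp.simpleFunc.denseRange (E := ℂ) (p := 2)
      (μ := (volume : Measure (Rn n))) (by norm_num)).induction_on u hclosed ?_
    intro s
    apply hmain
    have h1 : Integrable (⇑(Lp.simpleFunc.toSimpleFunc s)) volume :=
      (SimpleFunc.memLp_iff_integrable (by norm_num) (by norm_num)).mp
        (Lp.simpleFunc.memLp s)
    exact h1.congr (Lp.simpleFunc.toSimpleFunc_eq_toFun s)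
  -- the normal operator
  set B : L2 n →L[ℂ] L2 n := ContinuousLinearMap.id ℂ (L2 n) - C β with hB
  have hBapp : ∀ u : L2 n, B u = u - C β u := fun u => rfl
  set T₀ : L2 n →L[ℂ] L2 n := adjoint A ∘L A + adjoint B ∘L B with hT₀
  have hTapp : ∀ u, T₀ u = adjoint A (A u) + adjoint B (B u) := fun u => rfl
  have hinner : ∀ u : L2 n, RCLike.re (K := ℂ) (inner (𝕜 := ℂ) (T₀ u) u)
      = ‖A u‖ ^ 2 + ‖u - C β u‖ ^ 2 := by
    intro u
    rw [hTapp, inner_add_left, map_add, adjoint_inner_left, adjoint_inner_left,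
      inner_self_eq_norm_sq, inner_self_eq_norm_sq, hBapp]
  have lower : ∀ u : L2 n, μ * ‖u‖ ≤ ‖T₀ u‖ := by
    intro u
    have h1 : μ * ‖u‖ ^ 2 ≤ RCLike.re (K := ℂ) (inner (𝕜 := ℂ) (T₀ u) u) :=
      (hinner u).symm ▸ key u
    have h2 : RCLike.re (K := ℂ) (inner (𝕜 := ℂ) (T₀ u) u) ≤ ‖T₀ u‖ * ‖u‖ :=
      le_trans (le_trans (le_abs_self _) (RCLike.abs_re_le_norm _))
        (norm_inner_le_norm _ _)
    rcases eq_or_lt_of_le (norm_nonneg u) with h | h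
    · rw [← h, mul_zero]; exact norm_nonneg _
    · nlinarith [h1.trans h2]
  have hanti : AntilipschitzWith (Real.toNNReal μ⁻¹) T₀ := by
    refine T₀.antilipschitz_of_bound fun u => ?_
    rw [Real.coe_toNNReal _ (by positivity)]
    have h2 := mul_le_mul_of_nonneg_left (lower u) (inv_nonneg.mpr hμpos.le)
    rwa [← mul_assoc, inv_mul_cancel₀ hμpos.ne', one_mul] at h2
  have hker : LinearMap.ker (T₀ : L2 n →ₗ[ℂ] L2 n) = ⊥ := by
    rw [LinearMap.ker_eq_bot']
    intro m hm
    have h1 := lower m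
    rw [show T₀ m = 0 from hm, norm_zero] at h1
    have h2 : ‖m‖ ≤ 0 := by nlinarith [hμpos]
    exact norm_le_zero_iff.mp h2
  have hrange : LinearMap.range (T₀ : L2 n →ₗ[ℂ] L2 n) = ⊤ := by
    have hclosedrange : IsClosed ((LinearMap.range (T₀ : L2 n →ₗ[ℂ] L2 n) : Submodule ℂ (L2 n)) : Set (L2 n)) := by
      have h1 : ((LinearMap.range (T₀ : L2 n →ₗ[ℂ] L2 n) : Submodule ℂ (L2 n)) : Set (L2 n))
          = Set.range fun x => T₀ x := by
        ext y; simp [LinearMap.mem_range, Set.mem_range]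
      rw [h1]
      exact hanti.isClosed_range T₀.uniformContinuous
    haveI : CompleteSpace (LinearMap.range (T₀ : L2 n →ₗ[ℂ] L2 n) : Submodule ℂ (L2 n)) :=
      hclosedrange.completeSpace_coe
    rw [← Submodule.orthogonal_eq_bot_iff, Submodule.eq_bot_iff]
    intro x hx
    have h0 : inner (𝕜 := ℂ) (T₀ x) x = 0 :=
      (Submodule.mem_orthogonal _ _).mp hx (T₀ x) (LinearMap.mem_range_self _ x)
    have h1 := key x
    rw [← hinner x, h0, map_zero] at h1
    have h2 : ‖x‖ ^ 2 ≤ 0 := by nlinarith [hμpos]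
    have h3 : ‖x‖ = 0 := by nlinarith [sq_nonneg ‖x‖, norm_nonneg x]
    exact norm_eq_zero.mp h3
  set e := ContinuousLinearEquiv.ofBijective T₀ hker hrange with he_def
  set S : L2 n →L[ℂ] L2 n := (e.symm : L2 n →L[ℂ] L2 n) with hS_def
  have hST : ∀ u, S (T₀ u) = u := fun u =>
    ContinuousLinearEquiv.ofBijective_symm_apply_apply T₀ hker hrange u
  have hTS : ∀ g, T₀ (S g) = g := fun g =>
    ContinuousLinearEquiv.ofBijective_apply_symm_apply T₀ hker hrange g
  have hSTcomp : S ∘L T₀ = ContinuousLinearMap.id ℂ (L2 n) :=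
    ContinuousLinearMap.ext fun u => hST u
  have hTScomp : T₀ ∘L S = ContinuousLinearMap.id ℂ (L2 n) :=
    ContinuousLinearMap.ext fun g => hTS g
  have hSnorm : ‖S‖ ≤ 1 / μ := by
    refine opNorm_le_bound S (by positivity) fun g => ?_
    have h1 := lower (S g)
    rw [hTS g] at h1
    rw [one_div]
    have h2 := mul_le_mul_of_nonneg_left h1 (inv_nonneg.mpr hμpos.le)
    rwa [← mul_assoc, inv_mul_cancel₀ hμpos.ne', one_mul] at h2
  set R : L2 n →L[ℂ] L2 n := S ∘L adjoint A with hR_def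
  have hTR : ∀ g, T₀ (R g) = adjoint A g := fun g => hTS (adjoint A g)
  have hRnorm : ‖R‖ ≤ 1 / μ := by
    refine opNorm_le_bound R (by positivity) fun g => ?_
    have h1 : μ * ‖R g‖ ^ 2 ≤ RCLike.re (K := ℂ) (inner (𝕜 := ℂ) (T₀ (R g)) (R g)) :=
      (hinner (R g)).symm ▸ key (R g)
    have h2 : RCLike.re (K := ℂ) (inner (𝕜 := ℂ) (T₀ (R g)) (R g))
        = RCLike.re (K := ℂ) (inner (𝕜 := ℂ) g (A (R g))) := by
      rw [hTR g, adjoint_inner_left]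
    have h3 : RCLike.re (K := ℂ) (inner (𝕜 := ℂ) g (A (R g))) ≤ ‖g‖ * ‖A (R g)‖ :=
      le_trans (le_trans (le_abs_self _) (RCLike.abs_re_le_norm _))
        (norm_inner_le_norm _ _)
    have h4 : ‖A (R g)‖ ≤ ‖R g‖ := normA_le (R g)
    have h5 : μ * ‖R g‖ ^ 2 ≤ ‖g‖ * ‖R g‖ := by nlinarith [norm_nonneg g, h1, h3, h4]
    rcases eq_or_lt_of_le (norm_nonneg (R g)) with h | h
    · rw [← h]; positivity
    · rw [one_div]
      have h6 : μ * ‖R g‖ ≤ ‖g‖ := by nlinarith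
      have h7 := mul_le_mul_of_nonneg_left h6 (inv_nonneg.mpr hμpos.le)
      rwa [← mul_assoc, inv_mul_cancel₀ hμpos.ne', one_mul] at h7
  -- the quadratic expansion around the minimizer
  have hexp : ∀ g u : L2 n,
      ‖A u - g‖ ^ 2 + ‖u - C β u‖ ^ 2
        = (‖A (R g) - g‖ ^ 2 + ‖R g - C β (R g)‖ ^ 2)
          + (‖A (u - R g)‖ ^ 2 + ‖(u - R g) - C β (u - R g)‖ ^ 2) := by
    intro g u
    set u₀ := R g with hu₀
    set w := u - u₀ with hwd
    have hu_eq : u = u₀ + w := by rw [hwd]; abel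
    have hA_eq : A u - g = (A u₀ - g) + A w := by rw [hu_eq, map_add]; abel
    have hB_eq : u - C β u = (u₀ - C β u₀) + (w - C β w) := by
      conv_lhs => rw [hu_eq]
      rw [map_add]; abel
    have c1 : inner (𝕜 := ℂ) (A u₀ - g) (A w)
        = inner (𝕜 := ℂ) (adjoint A (A u₀ - g)) w :=
      (adjoint_inner_left A w (A u₀ - g)).symm
    have c2 : inner (𝕜 := ℂ) (u₀ - C β u₀) (w - C β w)
        = inner (𝕜 := ℂ) (adjoint B (B u₀)) w := by
      rw [← hBapp u₀, ← hBapp w]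
      exact (adjoint_inner_left B w (B u₀)).symm
    have c3 : adjoint A (A u₀ - g) + adjoint B (B u₀) = 0 := by
      rw [map_sub]
      have h9 : adjoint A (A u₀) + adjoint B (B u₀) = T₀ u₀ := (hTapp u₀).symm
      calc adjoint A (A u₀) - adjoint A g + adjoint B (B u₀)
          = (adjoint A (A u₀) + adjoint B (B u₀)) - adjoint A g := by abel
        _ = T₀ u₀ - adjoint A g := by rw [h9]
        _ = 0 := by rw [hTR g]; exact sub_self _
    have cross : RCLike.re (K := ℂ) (inner (𝕜 := ℂ) (A u₀ - g) (A w))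
        + RCLike.re (K := ℂ) (inner (𝕜 := ℂ) (u₀ - C β u₀) (w - C β w)) = 0 := by
      rw [c1, c2, ← map_add, ← inner_add_left, c3, inner_zero_left, map_zero]
    rw [hA_eq, hB_eq, norm_add_sq (𝕜 := ℂ), norm_add_sq (𝕜 := ℂ)]
    linear_combination (2:ℝ) * cross
  refine ⟨μ, hμpos, hleast, key, ⟨S, hSTcomp, hTScomp, hSnorm⟩, ⟨R, hRnorm, ?_⟩⟩
  intro g
  constructor
  · intro u
    rw [hexp g u]
    have h1 : 0 ≤ ‖A (u - R g)‖ ^ 2 + ‖(u - R g) - C β (u - R g)‖ ^ 2 := by positivity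
    linarith
  · intro u hu
    have h2 := hu (R g)
    rw [hexp g u] at h2
    have h3 := key (u - R g)
    have h4 : μ * ‖u - R g‖ ^ 2 ≤ 0 := by linarith
    have h5 : ‖u - R g‖ ^ 2 = 0 := by nlinarith [sq_nonneg ‖u - R g‖]
    have h6 : u - R g = 0 := by
      rw [pow_eq_zero_iff (two_ne_zero)] at h5
      exact norm_eq_zero.mp h5
    exact sub_eq_zero.mp h6
end
end

section
/- For q > 0 and f_q(t) = (−ln t)^{−q}, the following hold for all a, b > 0: (1) if 0 < λ ≤ 1 then for all t ∈ (0,1), f_q(λ t^a) ≤ max{1, (b/a)^q} f_q(λ t^b); (2) if λ > 1 and 2b > a then for all t ∈ (0, λ^{−2/a}), f_q(λ t^a) ≤ max{1, ((2b−a)/a)^q} f_q(λ t^b); (3) if 0 < λ ≤ 1 then for all t ∈ (0,1), f_q(λ t) ≤ f_q(t); and (4) if λ > 1 then for all t ∈ (0, λ^{−2}), f_q(λ t) ≤ 2^q f_q(t). -/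
/-
STATEMENT 16: For q > 0, f_q(t) = (−ln t)^{−q} and all a, b > 0:
(1) if 0 < λ ≤ 1 then ∀ t ∈ (0,1), f_q(λ t^a) ≤ max{1, (b/a)^q} f_q(λ t^b);
(2) if λ > 1 and 2b > a then ∀ t ∈ (0, λ^{−2/a}), f_q(λ t^a) ≤ max{1, ((2b−a)/a)^q} f_q(λ t^b);
(3) if 0 < λ ≤ 1 then ∀ t ∈ (0,1), f_q(λ t) ≤ f_q(t);
(4) if λ > 1 then ∀ t ∈ (0, λ^{−2}), f_q(λ t) ≤ 2^q f_q(t).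
-/

noncomputable section

/-- The logarithmic source function f_q(t) = (−ln t)^{−q}. -/
def fq (q t : ℝ) : ℝ := (-Real.log t) ^ (-q)

lemma fq_aux (q X Y c : ℝ) (hq : 0 ≤ q) (hX : 0 < X) (hY : 0 < Y) (hc : 0 < c)
    (h : Y ≤ c * X) : X ^ (-q) ≤ c ^ q * Y ^ (-q) := by
  rw [Real.rpow_neg hX.le, Real.rpow_neg hY.le, ← Real.inv_rpow hX.le, ← Real.inv_rpow hY.le,
    ← Real.mul_rpow hc.le (by positivity)]
  apply Real.rpow_le_rpow (by positivity) _ hq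
  have hYi : 0 < Y⁻¹ := inv_pos.2 hY
  have h1 : Y⁻¹ * Y = 1 := inv_mul_cancel₀ hY.ne'
  have h2 : Y⁻¹ * Y ≤ Y⁻¹ * (c * X) := by nlinarith
  rw [h1] at h2
  rw [inv_eq_one_div, div_le_iff₀ hX]
  nlinarith

lemma max_rpow (q d : ℝ) (hq : 0 ≤ q) (hd : 0 ≤ d) :
    (max 1 d) ^ q = max 1 (d ^ q) := by
  rcases le_total d 1 with h | h
  · rw [max_eq_left h, max_eq_left (Real.rpow_le_one hd h hq), Real.one_rpow]
  · rw [max_eq_right h, max_eq_right (Real.one_le_rpow h hq)]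

theorem stmt16 (q : ℝ) (hq : 0 < q) (a b : ℝ) (ha : 0 < a) (hb : 0 < b) :
    (∀ l : ℝ, 0 < l → l ≤ 1 → ∀ t ∈ Set.Ioo (0 : ℝ) 1,
      fq q (l * t ^ a) ≤ max 1 ((b / a) ^ q) * fq q (l * t ^ b)) ∧
    (∀ l : ℝ, 1 < l → 2 * b > a →
      ∀ t ∈ Set.Ioo (0 : ℝ) (l ^ (-(2 / a))),
        fq q (l * t ^ a) ≤ max 1 (((2 * b - a) / a) ^ q) * fq q (l * t ^ b)) ∧
    (∀ l : ℝ, 0 < l → l ≤ 1 → ∀ t ∈ Set.Ioo (0 : ℝ) 1, fq q (l * t) ≤ fq q t) ∧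
    (∀ l : ℝ, 1 < l → ∀ t ∈ Set.Ioo (0 : ℝ) (l ^ (-(2 : ℝ))),
      fq q (l * t) ≤ 2 ^ q * fq q t) := by
  refine ⟨?_, ?_, ?_, ?_⟩
  · -- Part 1
    intro l hl hl1 t ht
    obtain ⟨ht0, ht1⟩ := ht
    have hL : 0 ≤ -Real.log l := by
      have := Real.log_nonpos hl.le hl1; linarith
    have hT : 0 < -Real.log t := by
      have := Real.log_neg ht0 ht1; linarith
    have hXa : fq q (l * t ^ a) = (-(Real.log l + a * Real.log t)) ^ (-q) := by
      rw [fq, Real.log_mul hl.ne' (by positivity), Real.log_rpow ht0]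
    have hXb : fq q (l * t ^ b) = (-(Real.log l + b * Real.log t)) ^ (-q) := by
      rw [fq, Real.log_mul hl.ne' (by positivity), Real.log_rpow ht0]
    rw [hXa, hXb, ← max_rpow q (b / a) hq.le (by positivity)]
    set c := max 1 (b / a) with hc
    have hc1 : 1 ≤ c := le_max_left _ _
    have hcb : b ≤ c * a := by
      have h1 : b / a ≤ c := le_max_right _ _
      have := (div_le_iff₀ ha).mp h1
      linarith
    apply fq_aux q _ _ c hq.le ?_ ?_ (by linarith)
    · nlinarith [mul_pos ha hT, mul_pos hb hT, mul_le_mul_of_nonneg_right hcb hT.le]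
    · nlinarith [mul_pos ha hT]
    · nlinarith [mul_pos hb hT]
  · -- Part 2
    intro l hl hba t ht
    obtain ⟨ht0, ht1⟩ := ht
    have hl0 : (0:ℝ) < l := lt_trans one_pos hl
    have hM : 0 < Real.log l := Real.log_pos hl
    set M := Real.log l
    have hTbig : -Real.log t > 2 / a * M := by
      have h1 : Real.log t < Real.log (l ^ (-(2 / a))) := Real.log_lt_log ht0 ht1
      rw [Real.log_rpow hl0] at h1
      have : Real.log t < -(2 / a) * M := h1
      linarith
    set T := -Real.log t with hTdef
    have hT : 0 < T := by
      have : 0 < 2 / a * M := by positivity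
      linarith
    have haT : a * T > 2 * M := by
      have h2 := mul_lt_mul_of_pos_left hTbig ha
      have h3 : a * (2 / a * M) = 2 * M := by field_simp
      rw [h3] at h2
      exact h2
    have hbT : b * T > M := by nlinarith [mul_pos hb hT]
    have hXa : fq q (l * t ^ a) = (a * T - M) ^ (-q) := by
      rw [fq, Real.log_mul hl0.ne' (by positivity), Real.log_rpow ht0]
      ring_nf
      congr 1
      simp only [hTdef, M]
      ring
    have hXb : fq q (l * t ^ b) = (b * T - M) ^ (-q) := by
      rw [fq, Real.log_mul hl0.ne' (by positivity), Real.log_rpow ht0]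
      ring_nf
      congr 1
      simp only [hTdef, M]
      ring
    rw [hXa, hXb, ← max_rpow q ((2 * b - a) / a) hq.le (div_nonneg (by linarith) ha.le)]
    set c := max 1 ((2 * b - a) / a) with hc
    have hc1 : 1 ≤ c := le_max_left _ _
    have hcb : 2 * b - a ≤ c * a := by
      have h1 : (2 * b - a) / a ≤ c := le_max_right _ _
      have := (div_le_iff₀ ha).mp h1
      linarith
    apply fq_aux q _ _ c hq.le (by linarith) (by linarith) (by linarith)
    nlinarith [mul_nonneg (sub_nonneg.2 hc1) (by linarith : (0:ℝ) ≤ a * T - 2 * M),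
      mul_nonneg (by linarith : (0:ℝ) ≤ c * a - (2 * b - a)) hT.le]
  · -- Part 3
    intro l hl hl1 t ht
    obtain ⟨ht0, ht1⟩ := ht
    have hL : 0 ≤ -Real.log l := by
      have := Real.log_nonpos hl.le hl1; linarith
    have hT : 0 < -Real.log t := by
      have := Real.log_neg ht0 ht1; linarith
    have hX : fq q (l * t) = (-Real.log l + -Real.log t) ^ (-q) := by
      rw [fq, Real.log_mul hl.ne' ht0.ne']
      ring_nf
    rw [hX, fq]
    have := fq_aux q (-Real.log l + -Real.log t) (-Real.log t) 1 hq.le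
      (by linarith) hT one_pos (by linarith)
    simpa using this
  · -- Part 4
    intro l hl t ht
    obtain ⟨ht0, ht1⟩ := ht
    have hl0 : (0:ℝ) < l := lt_trans one_pos hl
    have hM : 0 < Real.log l := Real.log_pos hl
    have hTbig : -Real.log t > 2 * Real.log l := by
      have h1 : Real.log t < Real.log (l ^ (-(2:ℝ))) := Real.log_lt_log ht0 ht1
      rw [Real.log_rpow hl0] at h1
      linarith
    have hX : fq q (l * t) = (-Real.log t - Real.log l) ^ (-q) := by
      rw [fq, Real.log_mul hl0.ne' ht0.ne']
      ring_nf
    rw [hX, fq]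
    exact fq_aux q (-Real.log t - Real.log l) (-Real.log t) 2 hq.le
      (by linarith) (by linarith) two_pos (by linarith)
end
end
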